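/- arXiv:2601.14736 — 9 statements merged into one kernel-verified Lean document; each statement's English description precedes it below -/
import Mathlib

section
/- For every real number β, the cubic polynomial Q_β(X) = X³ + (1−β)X² − (2+β)X − 1 has three distinct real roots q₁ < q₂ < q₃ satisfying q₁ < −1 < q₂ < 0 < q₃. -/
/-- For β ∈ ℝ, Q_β(X) = X³ + (1−β)X² − (2+β)X − 1. -/
def Qpoly (β X : ℝ) : ℝ := X ^ 3 + (1 - β) * X ^ 2 - (2 + β) * X - 1

theorem stmt0 (β : ℝ) :
    ∃ q1 q2 q3 : ℝ, q1 < -1 ∧ -1 < q2 ∧ q2 < 0 ∧ 0 < q3 ∧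
      Qpoly β q1 = 0 ∧ Qpoly β q2 = 0 ∧ Qpoly β q3 = 0 := by
  have hcont : Continuous (Qpoly β) := by unfold Qpoly; continuity
  set a : ℝ := -(|β| + 3) with ha
  set b : ℝ := |β| + 3 with hb
  have hβ1 : β ≤ |β| := le_abs_self β
  have hβ2 : -|β| ≤ β := neg_abs_le β
  have habs : (0:ℝ) ≤ |β| := abs_nonneg β
  have hQa : Qpoly β a < 0 := by
    unfold Qpoly
    nlinarith [sq_nonneg (|β| + 3), sq_nonneg β, sq_nonneg (|β|+1)]
  have hQb : 0 < Qpoly β b := by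
    unfold Qpoly
    simp only [hb]
    nlinarith [sq_nonneg (|β| + 3), mul_nonneg (sq_nonneg (|β|+3)) (sub_nonneg.2 hβ1), habs]
  have hQm1 : Qpoly β (-1) = 1 := by unfold Qpoly; ring
  have hQ0 : Qpoly β 0 = -1 := by unfold Qpoly; ring
  have ham1 : a < -1 := by simp only [ha]; nlinarith
  have hm10 : (-1:ℝ) < 0 := by norm_num
  have h0b : (0:ℝ) < b := by simp only [hb]; nlinarith
  -- root 1 in (a, -1)
  have h1 : Set.Ioo (Qpoly β a) (Qpoly β (-1)) ⊆ Qpoly β '' Set.Ioo a (-1) :=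
    intermediate_value_Ioo ham1.le hcont.continuousOn
  have hmem1 : (0:ℝ) ∈ Set.Ioo (Qpoly β a) (Qpoly β (-1)) := by
    rw [hQm1]; exact ⟨hQa, by norm_num⟩
  obtain ⟨q1, hq1mem, hq1⟩ := h1 hmem1
  -- root 2 in (-1, 0)
  have h2 : Set.Ioo (Qpoly β 0) (Qpoly β (-1)) ⊆ Qpoly β '' Set.Ioo (-1) 0 :=
    intermediate_value_Ioo' hm10.le hcont.continuousOn
  have hmem2 : (0:ℝ) ∈ Set.Ioo (Qpoly β 0) (Qpoly β (-1)) := by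
    rw [hQm1, hQ0]; exact ⟨by norm_num, by norm_num⟩
  obtain ⟨q2, hq2mem, hq2⟩ := h2 hmem2
  -- root 3 in (0, b)
  have h3 : Set.Ioo (Qpoly β 0) (Qpoly β b) ⊆ Qpoly β '' Set.Ioo 0 b :=
    intermediate_value_Ioo h0b.le hcont.continuousOn
  have hmem3 : (0:ℝ) ∈ Set.Ioo (Qpoly β 0) (Qpoly β b) := by
    rw [hQ0]; exact ⟨by norm_num, hQb⟩
  obtain ⟨q3, hq3mem, hq3⟩ := h3 hmem3
  exact ⟨q1, q2, q3, hq1mem.2, hq2mem.1, hq2mem.2, hq3mem.1, hq1, hq2, hq3⟩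
end

section
/- If β < γ, then the ordered roots of Q_β and Q_γ interlace strictly: q₁^β < q₁^γ < −1 < q₂^β < q₂^γ < 0 < q₃^β < q₃^γ, where q₁^β < q₂^β < q₃^β are the roots of Q_β and similarly for Q_γ. -/
lemma cubic_factor (a b c r1 r2 r3 x : ℝ) (h12 : r1 ≠ r2) (h13 : r1 ≠ r3) (h23 : r2 ≠ r3)
    (h1 : r1 ^ 3 + a * r1 ^ 2 + b * r1 + c = 0)
    (h2 : r2 ^ 3 + a * r2 ^ 2 + b * r2 + c = 0)
    (h3 : r3 ^ 3 + a * r3 ^ 2 + b * r3 + c = 0) :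
    x ^ 3 + a * x ^ 2 + b * x + c = (x - r1) * (x - r2) * (x - r3) := by
  have d12 : r1 - r2 ≠ 0 := sub_ne_zero.mpr h12
  have d13 : r1 - r3 ≠ 0 := sub_ne_zero.mpr h13
  have d23 : r2 - r3 ≠ 0 := sub_ne_zero.mpr h23
  have e12 : r1 ^ 2 + r1 * r2 + r2 ^ 2 + a * (r1 + r2) + b = 0 := by
    have h : (r1 - r2) * (r1 ^ 2 + r1 * r2 + r2 ^ 2 + a * (r1 + r2) + b) = 0 := by
      linear_combination h1 - h2
    exact (mul_eq_zero.mp h).resolve_left d12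
  have e13 : r1 ^ 2 + r1 * r3 + r3 ^ 2 + a * (r1 + r3) + b = 0 := by
    have h : (r1 - r3) * (r1 ^ 2 + r1 * r3 + r3 ^ 2 + a * (r1 + r3) + b) = 0 := by
      linear_combination h1 - h3
    exact (mul_eq_zero.mp h).resolve_left d13
  have hs : a + (r1 + r2 + r3) = 0 := by
    have h : (r2 - r3) * (a + (r1 + r2 + r3)) = 0 := by
      linear_combination e12 - e13
    exact (mul_eq_zero.mp h).resolve_left d23
  have eb : b - (r1 * r2 + r1 * r3 + r2 * r3) = 0 := by
    linear_combination e12 - (r1 + r2) * hs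
  have ec : c + r1 * r2 * r3 = 0 := by
    linear_combination h1 - r1 ^ 2 * hs - r1 * eb
  linear_combination x ^ 2 * hs + x * eb + ec

theorem stmt2 (β γ : ℝ) (hβγ : β < γ)
    (qb1 qb2 qb3 qg1 qg2 qg3 : ℝ)
    (hb1 : Qpoly β qb1 = 0) (hb1' : qb1 < -1)
    (hb2 : Qpoly β qb2 = 0) (hb2' : -1 < qb2) (hb2'' : qb2 < 0)
    (hb3 : Qpoly β qb3 = 0) (hb3' : 0 < qb3)
    (hg1 : Qpoly γ qg1 = 0) (hg1' : qg1 < -1)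
    (hg2 : Qpoly γ qg2 = 0) (hg2' : -1 < qg2) (hg2'' : qg2 < 0)
    (hg3 : Qpoly γ qg3 = 0) (hg3' : 0 < qg3) :
    qb1 < qg1 ∧ qb2 < qg2 ∧ qb3 < qg3 := by
  simp only [Qpoly] at *
  have h12 : qb1 ≠ qb2 := by linarith
  have h13 : qb1 ≠ qb3 := by linarith
  have h23 : qb2 ≠ qb3 := by linarith
  have fact : ∀ x : ℝ, x ^ 3 + (1 - β) * x ^ 2 + (-(2 + β)) * x + (-1)
      = (x - qb1) * (x - qb2) * (x - qb3) := by
    intro x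
    exact cubic_factor _ _ _ _ _ _ x h12 h13 h23
      (by linear_combination hb1) (by linear_combination hb2) (by linear_combination hb3)
  have key : ∀ y : ℝ, (y ^ 3 + (1 - γ) * y ^ 2 - (2 + γ) * y - 1 = 0) →
      (y - qb1) * (y - qb2) * (y - qb3) = (γ - β) * (y ^ 2 + y) := by
    intro y hy
    have := fact y
    linear_combination hy - this
  refine ⟨?_, ?_, ?_⟩
  · have h := key qg1 hg1
    have hpos : (γ - β) * (qg1 ^ 2 + qg1) > 0 :=
      mul_pos (by linarith) (by nlinarith)
    nlinarith [mul_pos (show (0:ℝ) < qb2 - qg1 by linarith) (show (0:ℝ) < qb3 - qg1 by linarith)]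
  · have h := key qg2 hg2
    have hneg : (γ - β) * (qg2 ^ 2 + qg2) < 0 :=
      mul_neg_of_pos_of_neg (by linarith) (by nlinarith)
    nlinarith [mul_pos (show (0:ℝ) < qg2 - qb1 by linarith) (show (0:ℝ) < qb3 - qg2 by linarith)]
  · have h := key qg3 hg3
    have hpos : (γ - β) * (qg3 ^ 2 + qg3) > 0 :=
      mul_pos (by linarith) (by nlinarith)
    nlinarith [mul_pos (show (0:ℝ) < qg3 - qb1 by linarith) (show (0:ℝ) < qg3 - qb2 by linarith)]
end

section
/- Let g(x) = ax² + bx + c with a ≠ 0 and suppose δ := b² − 4ac − 2b − 7 < 0. Then g has no 3-cycle: there are no pairwise distinct reals x, y, z with g(x) = y, g(y) = z, g(z) = x. -/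
set_option maxHeartbeats 1600000 in
/-- No 3-cycle for the normalized map `t ↦ t^2 + k` when `k > -7/4`. -/
lemma aux_no_three_cycle (k X Y Z : ℝ) (hk : -7/4 < k)
    (hXY : X ≠ Y) (hYZ : Y ≠ Z) (hXZ : X ≠ Z)
    (h1 : X ^ 2 + k = Y) (h2 : Y ^ 2 + k = Z) (h3 : Z ^ 2 + k = X) : False := by
  have hD : (X - Y) * ((Y - Z) * (Z - X)) ≠ 0 := by
    apply mul_ne_zero (sub_ne_zero.mpr hXY)
    exact mul_ne_zero (sub_ne_zero.mpr hYZ) (sub_ne_zero.mpr (Ne.symm hXZ))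
  -- product of slopes equals 1
  have s1 : (X + Y) * (X - Y) = Y - Z := by linear_combination h1 - h2
  have s2 : (Y + Z) * (Y - Z) = Z - X := by linear_combination h2 - h3
  have s3 : (Z + X) * (Z - X) = X - Y := by linear_combination h3 - h1
  have hE : (X + Y) * (Y + Z) * (Z + X) = 1 := by
    have h : ((X + Y) * (Y + Z) * (Z + X) - 1) * ((X - Y) * ((Y - Z) * (Z - X))) = 0 := by
      linear_combination (Y+Z)*(Y-Z)*(Z+X)*(Z-X)*s1 + (Y-Z)*(Z+X)*(Z-X)*s2 + (Y-Z)*(Z-X)*s3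
    rcases mul_eq_zero.mp h with h' | h'
    · linarith [sub_eq_zero.mp h']
    · exact absurd h' hD
  -- key identity
  have key : (2 * (X + Y + Z) - 3) * ((X + Y + Z) ^ 2 + (X + Y + Z) + k + 2) = 0 := by
    linear_combination (2*X - 1) * h1 + (2*Y - 1) * h2 + (2*Z - 1) * h3 + 6 * hE
  rcases mul_eq_zero.mp key with hs | hs
  · -- case s = 3/2
    have hQ : X ^ 2 + Y ^ 2 + Z ^ 2 = 3/2 - 3 * k := by
      linear_combination h1 + h2 + h3 + (1/2) * hs
    have hq : X * Y + Y * Z + Z * X = 3/8 + 3 * k / 2 := by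
      linear_combination ((X + Y + Z) / 4 + 3/8) * hs - (1/2) * hQ
    have hr : X * Y * Z = 9 * k / 4 - 7/16 := by
      linear_combination (-1) * hE + ((X * Y + Y * Z + Z * X) / 2) * hs + (3/2) * hq
    have h22 : X ^ 2 * Y ^ 2 + Y ^ 2 * Z ^ 2 + Z ^ 2 * X ^ 2
        = 9 * k ^ 2 / 4 - 45 * k / 8 + 93/64 := by
      linear_combination (X * Y + Y * Z + Z * X + 3/8 + 3 * k / 2) * hq
        - 2 * (X + Y + Z) * hr - (9 * k / 4 - 7/16) * hs
    have hP : (4 * k - 1) * ((4 * k - 7) * (4 * k + 23)) = 0 := by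
      linear_combination 256 * ((Y ^ 2 + k) * (Z ^ 2 + k) * h1 + Y * (Z ^ 2 + k) * h2
        + Y * Z * h3) - 256 * ((X * Y * Z + 9 * k / 4 - 23/16) * hr + k * h22 + k ^ 2 * hQ)
    rcases mul_eq_zero.mp hP with h14 | h'
    · -- k = 1/4 forces X = Y = Z
      have hz : (X - Y) ^ 2 + (Y - Z) ^ 2 + (Z - X) ^ 2 = 0 := by
        linear_combination 2 * hQ - 2 * hq - (9/4) * h14
      exact hXY (sub_eq_zero.mp (by
        nlinarith [sq_nonneg (X - Y), sq_nonneg (Y - Z), sq_nonneg (Z - X)]))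
    · rcases mul_eq_zero.mp h' with h47 | h423
      · -- k = 7/4 contradicts X² + Y² + Z² ≥ 0
        nlinarith [sq_nonneg X, sq_nonneg Y, sq_nonneg Z]
      · -- k = -23/4 contradicts k > -7/4
        linarith
  · -- case k = -(s² + s + 2) ≤ -7/4
    nlinarith [sq_nonneg (X + Y + Z + 1/2)]

theorem stmt10 (a b c : ℝ) (ha : a ≠ 0)
    (hδ : b ^ 2 - 4 * a * c - 2 * b - 7 < 0) :
    ¬ ∃ x y z : ℝ, x ≠ y ∧ y ≠ z ∧ x ≠ z ∧
      a * x ^ 2 + b * x + c = y ∧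
      a * y ^ 2 + b * y + c = z ∧
      a * z ^ 2 + b * z + c = x := by
  rintro ⟨x, y, z, hxy, hyz, hxz, e1, e2, e3⟩
  have inj : ∀ u v : ℝ, u ≠ v → a * u + b / 2 ≠ a * v + b / 2 := by
    intro u v huv h
    exact huv (by
      have : a * (u - v) = 0 := by linarith
      rcases mul_eq_zero.mp this with h' | h'
      · exact absurd h' ha
      · linarith [sub_eq_zero.mp h'])
  refine aux_no_three_cycle (a * c + b / 2 - b ^ 2 / 4) (a * x + b / 2) (a * y + b / 2)
    (a * z + b / 2) (by nlinarith) (inj _ _ hxy) (inj _ _ hyz) (inj _ _ hxz)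
    (by linear_combination a * e1) (by linear_combination a * e2)
    (by linear_combination a * e3)
end

section
/- Let g(x) = ax² + bx + c with a ≠ 0 and δ := b² − 4ac − 2b − 7 > 0. Then g has exactly two 3-cycles (as sets of points): the set of roots of R₊(X) = X³ + (3b+1−√δ)/(2a)·X² + (3b²+2b−9−δ−2(b+1)√δ)/(4a²)·X + (δ^{3/2}+(1−b)δ−(b²+2b−7)√δ+b³+b²−9b−1)/(8a³), and the set of roots of R₋ obtained by replacing √δ with −√δ. -/
/-- A set is a 3-cycle of the quadratic map g(x) = ax² + bx + c. -/
def IsThreeCycle (a b c : ℝ) (s : Set ℝ) : Prop :=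
  ∃ x y z : ℝ, x ≠ y ∧ y ≠ z ∧ x ≠ z ∧ s = {x, y, z} ∧
    a * x ^ 2 + b * x + c = y ∧
    a * y ^ 2 + b * y + c = z ∧
    a * z ^ 2 + b * z + c = x

/-- The scaled cubic whose roots form a 3-cycle. -/
noncomputable def Pc (a b t X : ℝ) : ℝ :=
  8*a^3*X^3 + 4*a^2*(3*b+1-t)*X^2 + 2*a*(3*b^2+2*b-9-t^2-2*(b+1)*t)*X +
    (t^3+(1-b)*t^2-(b^2+2*b-7)*t+(b^3+b^2-9*b-1))

lemma cubic_root (p q r : ℝ) : ∃ x : ℝ, x^3 + p*x^2 + q*x + r = 0 := by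
  set S : ℝ := 1 + |p| + |q| + |r| with hS
  have hp0 : 0 ≤ |p| := abs_nonneg p
  have hp1 : p ≤ |p| := le_abs_self p
  have hp2 : -|p| ≤ p := neg_abs_le p
  have hq1 : q ≤ |q| := le_abs_self q
  have hq2 : -|q| ≤ q := neg_abs_le q
  have hr1 : r ≤ |r| := le_abs_self r
  have hr2 : -|r| ≤ r := neg_abs_le r
  have hq0 : 0 ≤ |q| := abs_nonneg q
  have hr0 : 0 ≤ |r| := abs_nonneg r
  have hS1 : 1 ≤ S := by simp only [hS]; linarith
  have hS0 : 0 ≤ S := by linarith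
  have hSS : S ≤ S^2 := by nlinarith
  have hneg : (-S)^3 + p*(-S)^2 + q*(-S) + r ≤ 0 := by
    have h1 : (|p| - p) * S^2 ≥ 0 := mul_nonneg (by linarith [le_abs_self p]) (sq_nonneg S)
    have h2 : (|q| + q) * S ≥ 0 := mul_nonneg (by linarith [neg_abs_le q]) hS0
    have h3 : |q| * (S^2 - S) ≥ 0 := mul_nonneg hq0 (by linarith)
    have h4 : |r| * (S^2 - 1) ≥ 0 := mul_nonneg hr0 (by nlinarith)
    have hcube : S^3 = (1 + |p| + |q| + |r|) * S^2 := by rw [← hS]; ring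
    nlinarith [sq_nonneg S]
  have hpos : 0 ≤ S^3 + p*S^2 + q*S + r := by
    have h1 : (|p| + p) * S^2 ≥ 0 := mul_nonneg (by linarith [neg_abs_le p]) (sq_nonneg S)
    have h2 : (|q| - q) * S ≥ 0 := mul_nonneg (by linarith [le_abs_self q]) hS0
    have h3 : |q| * (S^2 - S) ≥ 0 := mul_nonneg hq0 (by linarith)
    have h4 : |r| * (S^2 - 1) ≥ 0 := mul_nonneg hr0 (by nlinarith)
    have hcube : S^3 = (1 + |p| + |q| + |r|) * S^2 := by rw [← hS]; ring
    nlinarith [sq_nonneg S]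
  have hcont : ContinuousOn (fun x : ℝ => x^3 + p*x^2 + q*x + r) (Set.Icc (-S) S) :=
    (by continuity : Continuous fun x : ℝ => x^3 + p*x^2 + q*x + r).continuousOn
  have hsub := intermediate_value_Icc (by linarith : -S ≤ S) hcont
  obtain ⟨x, _, hx⟩ := hsub ⟨hneg, hpos⟩
  exact ⟨x, hx⟩

lemma Pc_root (a b t : ℝ) (ha : a ≠ 0) : ∃ x : ℝ, Pc a b t x = 0 := by
  obtain ⟨x, hx⟩ := cubic_root ((3*b+1-t)/(2*a))
    ((3*b^2+2*b-9-t^2-2*(b+1)*t)/(4*a^2))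
    ((t^3+(1-b)*t^2-(b^2+2*b-7)*t+(b^3+b^2-9*b-1))/(8*a^3))
  refine ⟨x, ?_⟩
  have key : Pc a b t x = 8*a^3 * (x^3 + (3*b+1-t)/(2*a)*x^2 +
      (3*b^2+2*b-9-t^2-2*(b+1)*t)/(4*a^2)*x +
      (t^3+(1-b)*t^2-(b^2+2*b-7)*t+(b^3+b^2-9*b-1))/(8*a^3)) := by
    simp only [Pc]
    field_simp
    ring
  rw [key, hx, mul_zero]

lemma Pc_invar (a b c t x : ℝ) (ht : t^2 = b^2 - 4*a*c - 2*b - 7)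
    (hx : Pc a b t x = 0) : Pc a b t (a*x^2+b*x+c) = 0 := by
  have h8 : (8:ℝ) * Pc a b t (a*x^2+b*x+c) = 0 := by
    simp only [Pc] at hx ⊢
    linear_combination (8*a^3*x^3 + 12*a^2*b*x^2 + 4*a^2*t*x^2 - 4*a^2*x^2 + 6*a*b^2*x + 4*a*b*t*x - 4*a*b*x - 2*a*t^2*x - 4*a*t*x - 18*a*x + b^3 + b^2*t - b^2 - b*t^2 - 2*b*t - 9*b - t^3 - t^2 - 7*t + 1) * hx + (48*a^4*x^4 + 96*a^3*b*x^3 + 48*a^3*c*x^2 + 60*a^2*b^2*x^2 + 48*a^2*b*c*x + 24*a^2*b*x^2 + 16*a^2*c^2 - 12*a^2*t^2*x^2 - 16*a^2*t*x^2 - 68*a^2*x^2 + 12*a*b^3*x + 4*a*b^2*c + 24*a*b^2*x + 16*a*b*c - 12*a*b*t^2*x - 16*a*b*t*x - 68*a*b*x - 4*a*c*t^2 - 8*a*c*t - 20*a*c + b^4 + 2*b^3 - 2*b^2*t^2 - 2*b^2*t - 8*b^2 - 2*b*t^2 - 4*b*t - 10*b + t^4 + 2*t^3 + 8*t^2 +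 6*t - 1) * ht
  linarith

lemma Pc_nofix (a b c t x : ℝ) (ha : a ≠ 0) (ht : t^2 = b^2 - 4*a*c - 2*b - 7)
    (hx : Pc a b t x = 0) (hfix : a*x^2+b*x+c = x) : False := by
  have key : 64*a*(t^2+t+7) = 0 := by
    simp only [Pc] at hx
    linear_combination (8*a^2*t*x - 8*a^2*x + 4*a*b*t - 4*a*b + 4*a*t^2 - 8*a*t + 28*a) * hx + (-64*a^4*t*x^2 + 64*a^4*x^2 - 64*a^3*b*t*x + 64*a^3*b*x - 64*a^3*t*x - 128*a^3*x - 16*a^2*b^2*t + 16*a^2*b^2 - 32*a^2*b*t - 64*a^2*b + 16*a^2*t^3 - 16*a^2*t^2 + 80*a^2*t - 272*a^2) * hfix + (16*a^3*t*x^2 - 16*a^3*x^2 + 16*a^2*b*t*x - 16*a^2*b*x + 16*a^2*t*x + 32*a^2*x + 4*a*b^2*t - 4*a*b^2 + 8*a*b*t + 16*a*b - 4*a*t^3 + 4*a*t^2 - 20*a*t + 68*a) * ht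
  have h7 : (0:ℝ) < t^2+t+7 := by nlinarith [sq_nonneg (2*t+1)]
  rcases mul_eq_zero.mp key with h | h
  · exact ha (by linarith)
  · linarith

lemma Pc_period3 (a b c t x : ℝ) (ht : t^2 = b^2 - 4*a*c - 2*b - 7)
    (hx : Pc a b t x = 0) :
    a*(a*(a*x^2+b*x+c)^2+b*(a*x^2+b*x+c)+c)^2 +
      b*(a*(a*x^2+b*x+c)^2+b*(a*x^2+b*x+c)+c) + c = x := by
  simp only [Pc] at hx
  linear_combination ((a*x^2+b*x+c - x) * (8*a^3*x^3 + 12*a^2*b*x^2 + 4*a^2*t*x^2 + 4*a^2*x^2 + 6*a*b^2*x + 4*a*b*t*x + 4*a*b*x - 2*a*t^2*x + 4*a*t*x - 18*a*x + b^3 + b^2*t + b^2 - b*t^2 + 2*b*t - 9*b - t^3 + t^2 - 7*t - 1) / 64) * hx + ((3/4)*a^5*x^6 + (9/4)*a^4*b*x^5 + (3/2)*a^4*c*x^4 - (1/4)*a^4*x^5 + (39/16)*a^3*b^2*x^4 + 3*a^3*b*c*x^3 + (1/8)*a^3*b*x^4 + a^3*c^2*x^2 - (3/16)*a^3*t^2*x^4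 - (17/16)*a^3*x^4 + (9/8)*a^2*b^3*x^3 + (7/4)*a^2*b^2*c*x^2 + (7/8)*a^2*b^2*x^3 + a^2*b*c^2*x + a^2*b*c*x^2 - (3/8)*a^2*b*t^2*x^3 - (17/8)*a^2*b*x^3 + (1/4)*a^2*c^3 - (1/4)*a^2*c*t^2*x^2 - (3/4)*a^2*c*x^2 + (1/8)*a^2*t^2*x^3 + (5/8)*a^2*x^3 + (13/64)*a*b^4*x^2 + (1/4)*a*b^3*c*x + (9/16)*a*b^3*x^2 + (1/16)*a*b^2*c^2 + a*b^2*c*x - (7/32)*a*b^2*t^2*x^2 - (37/32)*a*b^2*x^2 + (3/8)*a*b*c^2 - (1/4)*a*b*c*t^2*x - (3/4)*a*b*c*x + (1/16)*a*b*t^2*x^2 + (9/16)*a*b*x^2 - (1/16)*a*c^2*t^2 + (1/16)*a*c^2 + (1/64)*a*t^4*x^2 + (5/32)*a*t^2*x^2 + (5/64)*a*x^2 + (1/64)*b^5*x + (1/64)*b^4*c + (3/64)*b^4*x + (1/16)*b^3*c - (1/32)*b^3*t^2*x - (3/32)*b^3*x - (1/32)*b^2*c*t^2 - (1/32)*b^2*c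 - (1/32)*b^2*t^2*x + (3/32)*b^2*x - (1/16)*b*c*t^2 + (1/16)*b*c + (1/64)*b*t^4*x + (5/32)*b*t^2*x + (5/64)*b*x + (1/64)*c*t^4 + (3/32)*c*t^2 + (9/64)*c - (1/64)*t^4*x - (3/32)*t^2*x - (9/64)*x) * ht

lemma key_prod (a b c t x : ℝ) (ht : t^2 = b^2 - 4*a*c - 2*b - 7)
    (hg3 : a*(a*(a*x^2+b*x+c)^2+b*(a*x^2+b*x+c)+c)^2 +
      b*(a*(a*x^2+b*x+c)^2+b*(a*x^2+b*x+c)+c) + c = x) :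
    (a*x^2+b*x+c - x) * Pc a b t x * Pc a b (-t) x = 0 := by
  simp only [Pc]
  linear_combination (64:ℝ) * hg3 - (64 * ((3/4)*a^5*x^6 + (9/4)*a^4*b*x^5 + (3/2)*a^4*c*x^4 - (1/4)*a^4*x^5 + (39/16)*a^3*b^2*x^4 + 3*a^3*b*c*x^3 + (1/8)*a^3*b*x^4 + a^3*c^2*x^2 - (3/16)*a^3*t^2*x^4 - (17/16)*a^3*x^4 + (9/8)*a^2*b^3*x^3 + (7/4)*a^2*b^2*c*x^2 + (7/8)*a^2*b^2*x^3 + a^2*b*c^2*x + a^2*b*c*x^2 - (3/8)*a^2*b*t^2*x^3 - (17/8)*a^2*b*x^3 + (1/4)*a^2*c^3 - (1/4)*a^2*c*t^2*x^2 - (3/4)*a^2*c*x^2 + (1/8)*a^2*t^2*x^3 + (5/8)*a^2*x^3 + (13/64)*a*b^4*x^2 + (1/4)*a*b^3*c*x + (9/16)*a*b^3*x^2 + (1/16)*a*b^2*c^2 + a*b^2*c*x - (7/32)*a*b^2*t^2*x^2 - (37/32)*a*b^2*x^2 + (3/8)*a*b*c^2 - (1/4)*a*b*c*t^2*x - (3/4)*a*b*c*x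 + (1/16)*a*b*t^2*x^2 + (9/16)*a*b*x^2 - (1/16)*a*c^2*t^2 + (1/16)*a*c^2 + (1/64)*a*t^4*x^2 + (5/32)*a*t^2*x^2 + (5/64)*a*x^2 + (1/64)*b^5*x + (1/64)*b^4*c + (3/64)*b^4*x + (1/16)*b^3*c - (1/32)*b^3*t^2*x - (3/32)*b^3*x - (1/32)*b^2*c*t^2 - (1/32)*b^2*c - (1/32)*b^2*t^2*x + (3/32)*b^2*x - (1/16)*b*c*t^2 + (1/16)*b*c + (1/64)*b*t^4*x + (5/32)*b*t^2*x + (5/64)*b*x + (1/64)*c*t^4 + (3/32)*c*t^2 + (9/64)*c - (1/64)*t^4*x - (3/32)*t^2*x - (9/64)*x)) * ht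

lemma cubic_roots_iff (L A B C x y z : ℝ) (hL : L ≠ 0)
    (hxy : x ≠ y) (hyz : y ≠ z) (hxz : x ≠ z)
    (hx : L*x^3+A*x^2+B*x+C = 0) (hy : L*y^3+A*y^2+B*y+C = 0)
    (hz : L*z^3+A*z^2+B*z+C = 0) (w : ℝ) :
    L*w^3+A*w^2+B*w+C = 0 ↔ (w = x ∨ w = y ∨ w = z) := by
  have e1 : L*(x^2+x*y+y^2)+A*(x+y)+B = 0 := by
    have h : (x-y)*(L*(x^2+x*y+y^2)+A*(x+y)+B) = 0 := by linear_combination hx - hy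
    rcases mul_eq_zero.mp h with h' | h'
    · exact absurd (by linarith : x = y) hxy
    · exact h'
  have e2 : L*(x^2+x*z+z^2)+A*(x+z)+B = 0 := by
    have h : (x-z)*(L*(x^2+x*z+z^2)+A*(x+z)+B) = 0 := by linear_combination hx - hz
    rcases mul_eq_zero.mp h with h' | h'
    · exact absurd (by linarith : x = z) hxz
    · exact h'
  have eA : A = -L*(x+y+z) := by
    have h : (y-z)*(A + L*(x+y+z)) = 0 := by linear_combination e1 - e2
    rcases mul_eq_zero.mp h with h' | h'
    · exact absurd (by linarith : y = z) hyz
    · linarith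
  have eB : B = L*(x*y+y*z+x*z) := by linear_combination e1 - (x+y)*eA
  have eC : C = -L*(x*y*z) := by linear_combination hx - x^2*eA - x*eB
  constructor
  · intro hw
    have hfac : L*(w-x)*((w-y)*(w-z)) = 0 := by
      linear_combination hw - w^2*eA - w*eB - eC
    rcases mul_eq_zero.mp hfac with h | h
    · rcases mul_eq_zero.mp h with h' | h'
      · exact absurd h' hL
      · exact Or.inl (by linarith)
    · rcases mul_eq_zero.mp h with h' | h'
      · exact Or.inr (Or.inl (by linarith))
      · exact Or.inr (Or.inr (by linarith))
  · rintro (rfl | rfl | rfl) <;> assumption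

lemma Pc_roots_iff (a b t x y z : ℝ) (ha : a ≠ 0)
    (hxy : x ≠ y) (hyz : y ≠ z) (hxz : x ≠ z)
    (hx : Pc a b t x = 0) (hy : Pc a b t y = 0) (hz : Pc a b t z = 0) (w : ℝ) :
    Pc a b t w = 0 ↔ (w = x ∨ w = y ∨ w = z) := by
  have hL : (8:ℝ)*a^3 ≠ 0 := mul_ne_zero (by norm_num) (pow_ne_zero 3 ha)
  simp only [Pc] at hx hy hz ⊢
  exact cubic_roots_iff (8*a^3) (4*a^2*(3*b+1-t)) (2*a*(3*b^2+2*b-9-t^2-2*(b+1)*t))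
    (t^3+(1-b)*t^2-(b^2+2*b-7)*t+(b^3+b^2-9*b-1)) x y z hL hxy hyz hxz hx hy hz w

lemma build_cycle (a b c t : ℝ) (ha : a ≠ 0) (ht : t^2 = b^2 - 4*a*c - 2*b - 7) :
    ∃ x y z : ℝ, x ≠ y ∧ y ≠ z ∧ x ≠ z ∧
      a*x^2+b*x+c = y ∧ a*y^2+b*y+c = z ∧ a*z^2+b*z+c = x ∧
      Pc a b t x = 0 ∧ Pc a b t y = 0 ∧ Pc a b t z = 0 := by
  obtain ⟨x, hx⟩ := Pc_root a b t ha
  have hPy : Pc a b t (a*x^2+b*x+c) = 0 := Pc_invar a b c t x ht hx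
  have hPz : Pc a b t (a*(a*x^2+b*x+c)^2+b*(a*x^2+b*x+c)+c) = 0 :=
    Pc_invar a b c t _ ht hPy
  have hz3 := Pc_period3 a b c t x ht hx
  have hxy : x ≠ a*x^2+b*x+c := fun h => Pc_nofix a b c t x ha ht hx h.symm
  have hyz : a*x^2+b*x+c ≠ a*(a*x^2+b*x+c)^2+b*(a*x^2+b*x+c)+c := by
    intro h
    apply Pc_nofix a b c t (a*(a*x^2+b*x+c)^2+b*(a*x^2+b*x+c)+c) ha ht hPz
    conv_lhs => rw [← h]
  have hxz : x ≠ a*(a*x^2+b*x+c)^2+b*(a*x^2+b*x+c)+c := by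
    intro h
    apply Pc_nofix a b c t x ha ht hx
    conv_lhs => rw [h]
    exact hz3
  exact ⟨x, _, _, hxy, hyz, hxz, rfl, rfl, hz3, hx, hPy, hPz⟩

theorem stmt11 (a b c : ℝ) (ha : a ≠ 0)
    (hδ : 0 < b ^ 2 - 4 * a * c - 2 * b - 7) :
    let δ := b ^ 2 - 4 * a * c - 2 * b - 7
    let s := Real.sqrt δ
    let Splus : Set ℝ := {X | X ^ 3 + (3 * b + 1 - s) / (2 * a) * X ^ 2 +
      (3 * b ^ 2 + 2 * b - 9 - δ - 2 * (b + 1) * s) / (4 * a ^ 2) * X +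
      (s ^ 3 + (1 - b) * δ - (b ^ 2 + 2 * b - 7) * s + b ^ 3 + b ^ 2 - 9 * b - 1) /
        (8 * a ^ 3) = 0}
    let Sminus : Set ℝ := {X | X ^ 3 + (3 * b + 1 + s) / (2 * a) * X ^ 2 +
      (3 * b ^ 2 + 2 * b - 9 - δ + 2 * (b + 1) * s) / (4 * a ^ 2) * X +
      (-s ^ 3 + (1 - b) * δ + (b ^ 2 + 2 * b - 7) * s + b ^ 3 + b ^ 2 - 9 * b - 1) /
        (8 * a ^ 3) = 0}
    IsThreeCycle a b c Splus ∧ IsThreeCycle a b c Sminus ∧ Splus ≠ Sminus ∧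
    ∀ t : Set ℝ, IsThreeCycle a b c t → t = Splus ∨ t = Sminus := by
  intro δ s Splus Sminus
  have hδpos : 0 < δ := hδ
  have hδnn : (0:ℝ) ≤ δ := le_of_lt hδpos
  have hs2 : s ^ 2 = δ := Real.sq_sqrt hδnn
  have hspos : 0 < s := Real.sqrt_pos.mpr hδpos
  have ht1 : s^2 = b^2 - 4*a*c - 2*b - 7 := hs2
  have ht2 : (-s)^2 = b^2 - 4*a*c - 2*b - 7 := by rw [neg_sq]; exact ht1
  have hL : (8:ℝ)*a^3 ≠ 0 := mul_ne_zero (by norm_num) (pow_ne_zero 3 ha)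
  have hmemp : ∀ X : ℝ, X ∈ Splus ↔ Pc a b s X = 0 := by
    intro X
    show (X ^ 3 + (3 * b + 1 - s) / (2 * a) * X ^ 2 +
      (3 * b ^ 2 + 2 * b - 9 - δ - 2 * (b + 1) * s) / (4 * a ^ 2) * X +
      (s ^ 3 + (1 - b) * δ - (b ^ 2 + 2 * b - 7) * s + b ^ 3 + b ^ 2 - 9 * b - 1) /
        (8 * a ^ 3) = 0) ↔ _
    rw [← hs2]
    have heq : X ^ 3 + (3 * b + 1 - s) / (2 * a) * X ^ 2 +
      (3 * b ^ 2 + 2 * b - 9 - s ^ 2 - 2 * (b + 1) * s) / (4 * a ^ 2) * X +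
      (s ^ 3 + (1 - b) * s ^ 2 - (b ^ 2 + 2 * b - 7) * s + b ^ 3 + b ^ 2 - 9 * b - 1) /
        (8 * a ^ 3) = Pc a b s X / (8*a^3) := by
      rw [eq_div_iff hL]; simp only [Pc]; field_simp; ring
    rw [heq, div_eq_zero_iff]
    simp [hL]
  have hmemm : ∀ X : ℝ, X ∈ Sminus ↔ Pc a b (-s) X = 0 := by
    intro X
    show (X ^ 3 + (3 * b + 1 + s) / (2 * a) * X ^ 2 +
      (3 * b ^ 2 + 2 * b - 9 - δ + 2 * (b + 1) * s) / (4 * a ^ 2) * X +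
      (-s ^ 3 + (1 - b) * δ + (b ^ 2 + 2 * b - 7) * s + b ^ 3 + b ^ 2 - 9 * b - 1) /
        (8 * a ^ 3) = 0) ↔ _
    rw [← hs2]
    have heq : X ^ 3 + (3 * b + 1 + s) / (2 * a) * X ^ 2 +
      (3 * b ^ 2 + 2 * b - 9 - s ^ 2 + 2 * (b + 1) * s) / (4 * a ^ 2) * X +
      (-s ^ 3 + (1 - b) * s ^ 2 + (b ^ 2 + 2 * b - 7) * s + b ^ 3 + b ^ 2 - 9 * b - 1) /
        (8 * a ^ 3) = Pc a b (-s) X / (8*a^3) := by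
      rw [eq_div_iff hL]; simp only [Pc]; field_simp; ring
    rw [heq, div_eq_zero_iff]
    simp [hL]
  obtain ⟨x₁, y₁, z₁, h₁xy, h₁yz, h₁xz, h₁gx, h₁gy, h₁gz, h₁Px, h₁Py, h₁Pz⟩ :=
    build_cycle a b c s ha ht1
  obtain ⟨x₂, y₂, z₂, h₂xy, h₂yz, h₂xz, h₂gx, h₂gy, h₂gz, h₂Px, h₂Py, h₂Pz⟩ :=
    build_cycle a b c (-s) ha ht2
  have hSp : Splus = {x₁, y₁, z₁} := by
    ext w
    rw [hmemp w, Pc_roots_iff a b s x₁ y₁ z₁ ha h₁xy h₁yz h₁xz h₁Px h₁Py h₁Pz w]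
    simp [Set.mem_insert_iff, Set.mem_singleton_iff]
  have hSm : Sminus = {x₂, y₂, z₂} := by
    ext w
    rw [hmemm w, Pc_roots_iff a b (-s) x₂ y₂ z₂ ha h₂xy h₂yz h₂xz h₂Px h₂Py h₂Pz w]
    simp [Set.mem_insert_iff, Set.mem_singleton_iff]
  refine ⟨⟨x₁, y₁, z₁, h₁xy, h₁yz, h₁xz, hSp, h₁gx, h₁gy, h₁gz⟩,
          ⟨x₂, y₂, z₂, h₂xy, h₂yz, h₂xz, hSm, h₂gx, h₂gy, h₂gz⟩, ?_, ?_⟩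
  · intro hEq
    have hquad : ∀ w : ℝ, Pc a b s w = 0 → Pc a b (-s) w = 0 →
        4*a^2*w^2 + 4*a*(b+1)*w + (b^2+2*b-7-s^2) = 0 := by
      intro w hw1 hw2
      have h0 : (-2*s) * (4*a^2*w^2 + 4*a*(b+1)*w + (b^2+2*b-7-s^2)) = 0 := by
        simp only [Pc] at hw1 hw2
        linear_combination hw1 - hw2
      rcases mul_eq_zero.mp h0 with h | h
      · linarith
      · exact h
    have hin : ∀ w : ℝ, Pc a b s w = 0 → Pc a b (-s) w = 0 := by
      intro w hw
      have hmem : w ∈ Splus := (hmemp w).mpr hw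
      rw [hEq] at hmem
      exact (hmemm w).mp hmem
    have q1 := hquad x₁ h₁Px (hin x₁ h₁Px)
    have q2 := hquad y₁ h₁Py (hin y₁ h₁Py)
    have q3 := hquad z₁ h₁Pz (hin z₁ h₁Pz)
    have l1 : 4*a^2*(x₁+y₁) + 4*a*(b+1) = 0 := by
      have h : (x₁-y₁) * (4*a^2*(x₁+y₁) + 4*a*(b+1)) = 0 := by linear_combination q1 - q2
      rcases mul_eq_zero.mp h with h' | h'
      · exact absurd (by linarith : x₁ = y₁) h₁xy
      · exact h'
    have l2 : 4*a^2*(x₁+z₁) + 4*a*(b+1) = 0 := by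
      have h : (x₁-z₁) * (4*a^2*(x₁+z₁) + 4*a*(b+1)) = 0 := by linear_combination q1 - q3
      rcases mul_eq_zero.mp h with h' | h'
      · exact absurd (by linarith : x₁ = z₁) h₁xz
      · exact h'
    have l3 : (4*a^2) * (y₁ - z₁) = 0 := by linear_combination l1 - l2
    rcases mul_eq_zero.mp l3 with h' | h'
    · have ha2 : a^2 = 0 := by linarith
      exact ha (sq_eq_zero_iff.mp ha2)
    · exact h₁yz (by linarith)
  · intro T hT
    obtain ⟨x, y, z, hxy, hyz, hxz, hTeq, hgx, hgy, hgz⟩ := hT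
    have hg3 : a*(a*(a*x^2+b*x+c)^2+b*(a*x^2+b*x+c)+c)^2 +
        b*(a*(a*x^2+b*x+c)^2+b*(a*x^2+b*x+c)+c) + c = x := by
      rw [hgx, hgy, hgz]
    have hprod := key_prod a b c s x ht1 hg3
    rw [hgx] at hprod
    have hyx : y - x ≠ 0 := sub_ne_zero_of_ne (Ne.symm hxy)
    rcases mul_eq_zero.mp hprod with h | hmins
    · rcases mul_eq_zero.mp h with h' | hplus
      · exact absurd h' hyx
      · left
        have hPy : Pc a b s y = 0 := by
          rw [← hgx]; exact Pc_invar a b c s x ht1 hplus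
        have hPz : Pc a b s z = 0 := by
          rw [← hgy]; exact Pc_invar a b c s y ht1 hPy
        rw [hTeq]
        ext w
        rw [hmemp w, Pc_roots_iff a b s x y z ha hxy hyz hxz hplus hPy hPz w]
        simp [Set.mem_insert_iff, Set.mem_singleton_iff]
    · right
      have hPy : Pc a b (-s) y = 0 := by
        rw [← hgx]; exact Pc_invar a b c (-s) x ht2 hmins
      have hPz : Pc a b (-s) z = 0 := by
        rw [← hgy]; exact Pc_invar a b c (-s) y ht2 hPy
      rw [hTeq]
      ext w
      rw [hmemm w, Pc_roots_iff a b (-s) x y z ha hxy hyz hxz hmins hPy hPz w]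
      simp [Set.mem_insert_iff, Set.mem_singleton_iff]
end

section
/- Let g(x) = ax² + bx + c with a ≠ 0 and δ := b² − 4ac − 2b − 7 = 0. Then g has exactly one 3-cycle, and its three points are the roots of the cubic P₂(X) = 8a³X³ + 4a²(3b+1)X² + 2a(3b²+2b−9)X + b³ + b² − 9b − 1. -/
/-!
The affine change of variable u = a x + b / 2 conjugates g to u ↦ u² + k with
k = a c + b / 2 - b² / 4, and δ = 0 means exactly k = -7/4. For f(u) = u² - 7/4 one has
64 (f³(u) - u) = (f(u) - u) · Q(u)² with Q(u) = 8u³ + 4u² - 18u - 1, so the points of a 3-cycle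
of f are roots of Q. Conversely Q divides Q ∘ f, Q has a real root (it changes sign on [-1, 0]),
and no root of Q is fixed by f, so the orbit of a root is a 3-cycle; as Q has at most three
roots, every 3-cycle is the full root set of Q. Finally P₂(X) = Q(a X + b / 2).
-/

open Set Polynomial

namespace Polynomial

theorem eq_or_eq_or_eq_of_isRoot {R : Type*} [CommRing R] [IsDomain R] {P : R[X]}
    (hP : P ≠ 0) (hdeg : P.natDegree ≤ 3) {p q r t : R} (hpq : p ≠ q) (hqr : q ≠ r)
    (hpr : p ≠ r) (hp : P.IsRoot p) (hq : P.IsRoot q) (hr : P.IsRoot r) (ht : P.IsRoot t) :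
    t = p ∨ t = q ∨ t = r := by
  classical
  by_contra! htpqr
  obtain ⟨htp, htq, htr⟩ := htpqr
  have hsub : ({t, p, q, r} : Finset R) ⊆ P.roots.toFinset := by
    intro x hx
    simp only [Finset.mem_insert, Finset.mem_singleton] at hx
    rw [Multiset.mem_toFinset, mem_roots hP]
    rcases hx with rfl | rfl | rfl | rfl <;> assumption
  have hcard : ({t, p, q, r} : Finset R).card = 4 := by
    rw [Finset.card_insert_of_notMem (by simp [htp, htq, htr]),
      Finset.card_insert_of_notMem (by simp [hpq, hpr]), Finset.card_pair hqr]
  have := (Finset.card_le_card hsub).trans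
    ((Multiset.toFinset_card_le _).trans ((card_roots' P).trans hdeg))
  omega

end Polynomial

theorem IsThreeCycle.image {a b c a' b' c' : ℝ} {h : ℝ → ℝ} (hinj : h.Injective)
    (hconj : ∀ x, h (a * x ^ 2 + b * x + c) = a' * h x ^ 2 + b' * h x + c') {s : Set ℝ}
    (hs : IsThreeCycle a b c s) : IsThreeCycle a' b' c' (h '' s) := by
  obtain ⟨x, y, z, hxy, hyz, hxz, rfl, hx, hy, hz⟩ := hs
  refine ⟨h x, h y, h z, hinj.ne hxy, hinj.ne hyz, hinj.ne hxz, ?_, ?_, ?_, ?_⟩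
  · simp only [image_insert_eq, image_singleton]
  · rw [← hconj, hx]
  · rw [← hconj, hy]
  · rw [← hconj, hz]

noncomputable def affineNormalize (a b : ℝ) (ha : a ≠ 0) : ℝ ≃ ℝ :=
  (Equiv.mulLeft₀ a ha).trans (Equiv.addRight (b / 2))

theorem affineNormalize_apply (a b : ℝ) (ha : a ≠ 0) (x : ℝ) :
    affineNormalize a b ha x = a * x + b / 2 :=
  rfl

theorem affineNormalize_conj (a b c : ℝ) (ha : a ≠ 0) (x : ℝ) :
    affineNormalize a b ha (a * x ^ 2 + b * x + c) = 1 * affineNormalize a b ha x ^ 2 +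
      0 * affineNormalize a b ha x + (a * c + b / 2 - b ^ 2 / 4) := by
  simp only [affineNormalize_apply]
  ring

theorem isThreeCycle_iff_image_affineNormalize (a b c : ℝ) (ha : a ≠ 0) (s : Set ℝ) :
    IsThreeCycle a b c s ↔
      IsThreeCycle 1 0 (a * c + b / 2 - b ^ 2 / 4) (affineNormalize a b ha '' s) := by
  set e := affineNormalize a b ha
  refine ⟨IsThreeCycle.image e.injective (affineNormalize_conj a b c ha), fun h => ?_⟩
  rw [← e.symm_image_image s]
  refine h.image e.symm.injective fun u => e.injective ?_
  rw [e.apply_symm_apply, affineNormalize_conj, e.apply_symm_apply]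

def cycleCubic (u : ℝ) : ℝ := 8 * u ^ 3 + 4 * u ^ 2 - 18 * u - 1

theorem cycleCubic_mul_sub_self (u : ℝ) :
    64 * ((((u ^ 2 - 7 / 4) ^ 2 - 7 / 4) ^ 2 - 7 / 4) - u) =
      (u ^ 2 - 7 / 4 - u) * cycleCubic u ^ 2 := by
  unfold cycleCubic; ring

theorem cycleCubic_sq_sub (u : ℝ) :
    cycleCubic (u ^ 2 - 7 / 4) = cycleCubic u * (u ^ 3 - u ^ 2 / 2 - 9 * u / 4 + 1 / 8) := by
  unfold cycleCubic; ring

theorem sq_sub_ne_self_of_cycleCubic_eq_zero {u : ℝ} (hu : cycleCubic u = 0) :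
    u ^ 2 - 7 / 4 ≠ u := by
  intro hfix
  unfold cycleCubic at hu
  have : u = -5 / 2 := by linear_combination hu / 8 - (u + 3 / 2) * hfix
  subst this
  norm_num at hfix

theorem cycleCubic_eq_zero_of_iterate {u : ℝ}
    (h3 : ((u ^ 2 - 7 / 4) ^ 2 - 7 / 4) ^ 2 - 7 / 4 = u) (h1 : u ^ 2 - 7 / 4 ≠ u) :
    cycleCubic u = 0 := by
  have h := cycleCubic_mul_sub_self u
  rw [h3, sub_self, mul_zero, eq_comm, mul_eq_zero] at h
  exact pow_eq_zero_iff two_ne_zero |>.mp (h.resolve_left (sub_ne_zero.mpr h1))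

theorem exists_cycleCubic_eq_zero : ∃ u, cycleCubic u = 0 := by
  have hcont : Continuous cycleCubic := by unfold cycleCubic; fun_prop
  obtain ⟨u, -, hu⟩ :=
    intermediate_value_Icc' (by norm_num : (-1 : ℝ) ≤ 0) hcont.continuousOn
      (show (0 : ℝ) ∈ Icc (cycleCubic 0) (cycleCubic (-1)) by unfold cycleCubic; norm_num)
  exact ⟨u, hu⟩

theorem setOf_cycleCubic_eq_zero {p q r : ℝ} (hpq : p ≠ q) (hqr : q ≠ r) (hpr : p ≠ r)
    (hp : cycleCubic p = 0) (hq : cycleCubic q = 0) (hr : cycleCubic r = 0) :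
    {u | cycleCubic u = 0} = {p, q, r} := by
  set P : ℝ[X] := C 8 * X ^ 3 + C 4 * X ^ 2 - C 18 * X - 1
  have hP : ∀ u, P.IsRoot u ↔ cycleCubic u = 0 := fun u => by simp [P, cycleCubic]
  have hP0 : P ≠ 0 := fun h => by simpa [cycleCubic] using (hP 0).mp (by simp [h])
  have hdeg : P.natDegree ≤ 3 := by simp only [P]; compute_degree
  ext t
  simp only [mem_ofPred_eq, mem_insert_iff, mem_singleton_iff]
  refine ⟨fun ht => eq_or_eq_or_eq_of_isRoot hP0 hdeg hpq hqr hpr ((hP p).mpr hp)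
    ((hP q).mpr hq) ((hP r).mpr hr) ((hP t).mpr ht), ?_⟩
  rintro (rfl | rfl | rfl) <;> assumption

theorem one_mul_sq_add_zero_mul_add_neg (u : ℝ) : 1 * u ^ 2 + 0 * u + -7 / 4 = u ^ 2 - 7 / 4 := by
  ring

theorem IsThreeCycle.eq_setOf_cycleCubic {t : Set ℝ} (ht : IsThreeCycle 1 0 (-7 / 4) t) :
    t = {u | cycleCubic u = 0} := by
  obtain ⟨x, y, z, hxy, hyz, hxz, rfl, hx, hy, hz⟩ := ht
  rw [one_mul_sq_add_zero_mul_add_neg] at hx hy hz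
  exact (setOf_cycleCubic_eq_zero hxy hyz hxz
    (cycleCubic_eq_zero_of_iterate (by rw [hx, hy, hz]) (hx ▸ hxy.symm))
    (cycleCubic_eq_zero_of_iterate (by rw [hy, hz, hx]) (hy ▸ hyz.symm))
    (cycleCubic_eq_zero_of_iterate (by rw [hz, hx, hy]) (hz ▸ hxz))).symm

theorem exists_isThreeCycle_normal : ∃ t, IsThreeCycle 1 0 (-7 / 4) t := by
  obtain ⟨p, hp⟩ := exists_cycleCubic_eq_zero
  have hq : cycleCubic (p ^ 2 - 7 / 4) = 0 := by rw [cycleCubic_sq_sub, hp, zero_mul]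
  have hp3 : ((p ^ 2 - 7 / 4) ^ 2 - 7 / 4) ^ 2 - 7 / 4 = p := by
    have h := cycleCubic_mul_sub_self p
    rw [hp] at h
    linear_combination h / 64
  have hg := one_mul_sq_add_zero_mul_add_neg
  refine ⟨_, p, p ^ 2 - 7 / 4, (p ^ 2 - 7 / 4) ^ 2 - 7 / 4,
    (sq_sub_ne_self_of_cycleCubic_eq_zero hp).symm, (sq_sub_ne_self_of_cycleCubic_eq_zero hq).symm,
    fun hpr => sq_sub_ne_self_of_cycleCubic_eq_zero hp ?_, rfl, hg _, hg _, (hg _).trans hp3⟩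
  -- p = f²(p) would give f(p) = f³(p) = p
  rwa [← hpr] at hp3

theorem isThreeCycle_normal_iff (t : Set ℝ) :
    IsThreeCycle 1 0 (-7 / 4) t ↔ t = {u | cycleCubic u = 0} := by
  refine ⟨IsThreeCycle.eq_setOf_cycleCubic, ?_⟩
  rintro rfl
  obtain ⟨t, ht⟩ := exists_isThreeCycle_normal
  exact ht.eq_setOf_cycleCubic ▸ ht

theorem isThreeCycle_iff_of_delta_eq_zero {a b c : ℝ} (ha : a ≠ 0)
    (hδ : b ^ 2 - 4 * a * c - 2 * b - 7 = 0) (s : Set ℝ) :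
    IsThreeCycle a b c s ↔
      s = {X : ℝ | 8 * a ^ 3 * X ^ 3 + 4 * a ^ 2 * (3 * b + 1) * X ^ 2 +
        2 * a * (3 * b ^ 2 + 2 * b - 9) * X + b ^ 3 + b ^ 2 - 9 * b - 1 = 0} := by
  have hk : a * c + b / 2 - b ^ 2 / 4 = -7 / 4 := by linear_combination (-1 / 4) * hδ
  rw [isThreeCycle_iff_image_affineNormalize a b c ha, hk, isThreeCycle_normal_iff,
    ← Equiv.eq_preimage_iff_image_eq]
  congr! 1
  ext X
  simp only [mem_preimage, mem_ofPred_eq, affineNormalize_apply, cycleCubic]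
  constructor <;> intro h <;> linear_combination h

theorem stmt12 (a b c : ℝ) (ha : a ≠ 0)
    (hδ : b ^ 2 - 4 * a * c - 2 * b - 7 = 0) :
    (∃! s : Set ℝ, IsThreeCycle a b c s) ∧
    ∀ s : Set ℝ, IsThreeCycle a b c s →
      s = {X : ℝ | 8 * a ^ 3 * X ^ 3 + 4 * a ^ 2 * (3 * b + 1) * X ^ 2 +
        2 * a * (3 * b ^ 2 + 2 * b - 9) * X + b ^ 3 + b ^ 2 - 9 * b - 1 = 0} := by
  have key := isThreeCycle_iff_of_delta_eq_zero ha hδ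
  exact ⟨⟨_, (key _).mpr rfl, fun s hs => (key s).mp hs⟩, fun s => (key s).mp⟩
end

section
/- Let g(x) = ax² + bx + c with a ≠ 0 and δ := b² − 4ac − 2b − 7 = 0 (so c = (b²−2b−7)/(4a)). Then for all real x, g(g(g(x))) − x = (1/(256a)) · P₁(x) · P₂(x)², where P₁(x) = 4a²x² + 4a(b−1)x + b² − 2b − 7 and P₂(x) = 8a³x³ + 4a²(3b+1)x² + 2a(3b²+2b−9)x + b³ + b² − 9b − 1. -/
theorem stmt13 (a b : ℝ) (ha : a ≠ 0) :
    let c := (b ^ 2 - 2 * b - 7) / (4 * a)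
    let g : ℝ → ℝ := fun x => a * x ^ 2 + b * x + c
    ∀ x : ℝ, g (g (g x)) - x =
      (1 / (256 * a)) *
        (4 * a ^ 2 * x ^ 2 + 4 * a * (b - 1) * x + b ^ 2 - 2 * b - 7) *
        (8 * a ^ 3 * x ^ 3 + 4 * a ^ 2 * (3 * b + 1) * x ^ 2 +
          2 * a * (3 * b ^ 2 + 2 * b - 9) * x + b ^ 3 + b ^ 2 - 9 * b - 1) ^ 2 := by
  intro c g x
  simp only [g, c]
  field_simp
  ring
end

section
/- Let g(x) = ax² + bx + c with a ≠ 0, δ := b² − 4ac − 2b − 7 ≥ 0, and let {x,y,z} be the 3-cycle C⟨δ⟩ whose points are xᵢ = (−b+√δ+1)/(2a) + 1/(a·qᵢ), where q₁, q₂, q₃ are the roots of Q_{√δ}. Then the multiplier of the cycle satisfies g'(x₁)·g'(x₂)·g'(x₃) = −δ^{3/2} − δ − 7√δ + 1. -/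
theorem stmt14 (a b c : ℝ) (ha : a ≠ 0)
    (hδ : 0 ≤ b ^ 2 - 4 * a * c - 2 * b - 7)
    (q1 q2 q3 : ℝ)
    (h1 : Qpoly (Real.sqrt (b ^ 2 - 4 * a * c - 2 * b - 7)) q1 = 0)
    (h2 : Qpoly (Real.sqrt (b ^ 2 - 4 * a * c - 2 * b - 7)) q2 = 0)
    (h3 : Qpoly (Real.sqrt (b ^ 2 - 4 * a * c - 2 * b - 7)) q3 = 0)
    (h12 : q1 ≠ q2) (h13 : q1 ≠ q3) (h23 : q2 ≠ q3) :
    let δ := b ^ 2 - 4 * a * c - 2 * b - 7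
    let x1 := (-b + Real.sqrt δ + 1) / (2 * a) + 1 / (a * q1)
    let x2 := (-b + Real.sqrt δ + 1) / (2 * a) + 1 / (a * q2)
    let x3 := (-b + Real.sqrt δ + 1) / (2 * a) + 1 / (a * q3)
    (2 * a * x1 + b) * (2 * a * x2 + b) * (2 * a * x3 + b)
      = -Real.sqrt δ ^ 3 - δ - 7 * Real.sqrt δ + 1 := by
  intro δ x1 x2 x3
  set β := Real.sqrt δ with hβ
  have hs : β ^ 2 = δ := Real.sq_sqrt hδ
  simp only [Qpoly] at h1 h2 h3
  have d12 : q1 - q2 ≠ 0 := sub_ne_zero.mpr h12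
  have d13 : q1 - q3 ≠ 0 := sub_ne_zero.mpr h13
  have d23 : q2 - q3 ≠ 0 := sub_ne_zero.mpr h23
  have A12 : q1^2 + q1*q2 + q2^2 + (1-β)*(q1+q2) - (2+β) = 0 := by
    have h : (q1 - q2) * (q1^2 + q1*q2 + q2^2 + (1-β)*(q1+q2) - (2+β)) = 0 := by
      linear_combination h1 - h2
    exact (mul_eq_zero.mp h).resolve_left d12
  have A13 : q1^2 + q1*q3 + q3^2 + (1-β)*(q1+q3) - (2+β) = 0 := by
    have h : (q1 - q3) * (q1^2 + q1*q3 + q3^2 + (1-β)*(q1+q3) - (2+β)) = 0 := by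
      linear_combination h1 - h3
    exact (mul_eq_zero.mp h).resolve_left d13
  have he1 : q1 + q2 + q3 = β - 1 := by
    have h : (q2 - q3) * ((q1 + q2 + q3) - (β - 1)) = 0 := by
      linear_combination A12 - A13
    have := (mul_eq_zero.mp h).resolve_left d23
    linarith [this]
  have he2 : q1*q2 + q1*q3 + q2*q3 = -(2+β) := by
    linear_combination (q1+q2)*he1 - A12
  have he3 : q1*q2*q3 = 1 := by
    linear_combination h1 - q1^2*he1 + q1*he2
  have hq1 : q1 ≠ 0 := by
    intro h; rw [h] at he3; simp at he3
  have hq2 : q2 ≠ 0 := by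
    intro h; rw [h] at he3; simp at he3
  have hq3 : q3 ≠ 0 := by
    intro h; rw [h] at he3; simp at he3
  have hx1 : 2 * a * x1 + b = β + 1 + 2 / q1 := by
    simp only [x1]; field_simp; ring
  have hx2 : 2 * a * x2 + b = β + 1 + 2 / q2 := by
    simp only [x2]; field_simp; ring
  have hx3 : 2 * a * x3 + b = β + 1 + 2 / q3 := by
    simp only [x3]; field_simp; ring
  rw [hx1, hx2, hx3, ← hs]
  field_simp
  ring_nf
  linear_combination (2*β^3+4*β^2+10*β) * he3 + (2*β^2+4*β+2) * he2 + (4*β+4) * he1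
end

section
/- The discrete dynamical system z_{t+1} = z_t² + c on ℝ has a 3-cycle (three pairwise distinct reals x, y, z with x²+c = y, y²+c = z, z²+c = x) if and only if c ≤ −7/4. -/
theorem stmt17 (c : ℝ) :
    (∃ x y z : ℝ, x ≠ y ∧ y ≠ z ∧ x ≠ z ∧
      x ^ 2 + c = y ∧ y ^ 2 + c = z ∧ z ^ 2 + c = x) ↔ c ≤ -7 / 4 := by
  constructor
  · rintro ⟨x, y, z, hxy, hyz, hxz, h1, h2, h3⟩
    by_contra hc
    push_neg at hc
    subst h1
    subst h2
    -- h3 : ((x^2+c)^2+c)^2 + c = x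
    have key : (x ^ 2 + c - x) *
        ((2 * x ^ 3 + x ^ 2 + (2 * c - 1) * x - (c + 2)) ^ 2
          + (4 * c + 7) * (x ^ 2 + x + c) ^ 2) = 0 := by
      linear_combination (4 : ℝ) * h3
    have hne : x ^ 2 + c - x ≠ 0 := fun h => hxy (by linarith [sub_eq_zero.mp h])
    have hE : (2 * x ^ 3 + x ^ 2 + (2 * c - 1) * x - (c + 2)) ^ 2
        + (4 * c + 7) * (x ^ 2 + x + c) ^ 2 = 0 := by
      rcases mul_eq_zero.mp key with h | h
      · exact absurd h hne
      · exact h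
    have hV : x ^ 2 + x + c = 0 := by
      by_contra hV
      have h1 : 0 < (x ^ 2 + x + c) ^ 2 :=
        lt_of_le_of_ne (sq_nonneg _) (Ne.symm (pow_ne_zero 2 hV))
      have h2 : 0 < (4 * c + 7) * (x ^ 2 + x + c) ^ 2 :=
        mul_pos (by linarith) h1
      nlinarith [sq_nonneg (2 * x ^ 3 + x ^ 2 + (2 * c - 1) * x - (c + 2))]
    exact hyz (by linear_combination (x - x ^ 2 - c) * hV)
  · intro hc
    set d := Real.sqrt (-4 * c - 7) with hddef
    have hd0 : 0 ≤ d := Real.sqrt_nonneg _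
    have hd : d ^ 2 = -4 * c - 7 := Real.sq_sqrt (by linarith)
    have hcont : Continuous fun x : ℝ =>
        2 * x ^ 3 + (1 - d) * x ^ 2 + (2 * c - 1 - d) * x - c * d - c - 2 := by
      fun_prop
    have hFp : (0 : ℝ) ≤ 2 * (d + 3) ^ 3 + (1 - d) * (d + 3) ^ 2
        + (2 * c - 1 - d) * (d + 3) - c * d - c - 2 := by
      have heq : 2 * (d + 3) ^ 3 + (1 - d) * (d + 3) ^ 2
          + (2 * c - 1 - d) * (d + 3) - c * d - c - 2
          = (3 * d ^ 3 + 43 * d ^ 2 + 181 * d + 197) / 4 := by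
        linear_combination (5 / 4 + d / 4) * hd
      rw [heq]
      nlinarith [mul_nonneg (mul_nonneg hd0 hd0) hd0, mul_nonneg hd0 hd0]
    have hFm : 2 * (-(d + 3)) ^ 3 + (1 - d) * (-(d + 3)) ^ 2
        + (2 * c - 1 - d) * (-(d + 3)) - c * d - c - 2 ≤ 0 := by
      have heq : 2 * (-(d + 3)) ^ 3 + (1 - d) * (-(d + 3)) ^ 2
          + (2 * c - 1 - d) * (-(d + 3)) - c * d - c - 2
          = -(9 * d ^ 3 + 81 * d ^ 2 + 191 * d + 127) / 4 := by
        linear_combination (-7 / 4 - 3 * d / 4) * hd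
      rw [heq]
      nlinarith [mul_nonneg (mul_nonneg hd0 hd0) hd0, mul_nonneg hd0 hd0]
    obtain ⟨a, -, ha⟩ := intermediate_value_Icc
      (by linarith : -(d + 3) ≤ d + 3) hcont.continuousOn ⟨hFm, hFp⟩
    simp only at ha
    -- ha : 2*a^3 + (1-d)*a^2 + (2*c-1-d)*a - c*d - c - 2 = 0
    have hmain : ((a ^ 2 + c) ^ 2 + c) ^ 2 + c = a := by
      linear_combination
        ((a ^ 2 + c - a) * (2 * a ^ 3 + (1 + d) * a ^ 2 + (2 * c - 1 + d) * a
          + c * d - c - 2) / 4) * ha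
        + ((c ^ 3 + a * c ^ 2 - a ^ 2 * c + 3 * a ^ 2 * c ^ 2 - a ^ 3
          + 2 * a ^ 3 * c - a ^ 4 + 3 * a ^ 4 * c + a ^ 5 + a ^ 6) / 4) * hd
    have hne1 : a ≠ a ^ 2 + c := by
      intro heq
      have hcontra : 4 * a ^ 2 + 2 * a + 1 = 0 := by
        linear_combination
          ((2 * a ^ 3 + (1 + d) * a ^ 2 + (2 * c - 1 + d) * a + c * d - c - 2) / 4) * ha
          + ((a ^ 2 + a + c) ^ 2 / 4) * hd
          + (a ^ 4 + 2 * a ^ 3 + 2 * a ^ 2 * c + 3 * a ^ 2 + 2 * a * c + 4 * a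
            + c ^ 2 + 2 * c + 1) * heq
      nlinarith [sq_nonneg (2 * a + 1 / 2)]
    refine ⟨a, a ^ 2 + c, (a ^ 2 + c) ^ 2 + c, hne1, ?_, ?_, rfl, rfl, hmain⟩
    · intro h
      apply hne1
      linear_combination (-((a ^ 2 + c) ^ 2 + c) - (a ^ 2 + c) - 1) * h - hmain
    · intro h
      apply hne1
      linear_combination (-a - ((a ^ 2 + c) ^ 2 + c)) * h - hmain
end

section
/- The logistic map x_{t+1} = λx_t(1−x_t) on ℝ has a 3-cycle (three pairwise distinct reals x, y, z with λx(1−x) = y, λy(1−y) = z, λz(1−z) = x) if and only if λ ≤ 1 − 2√2 or λ ≥ 1 + 2√2. -/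
lemma cubic_has_root (a b c : ℝ) : ∃ x : ℝ, x^3 + a*x^2 + b*x + c = 0 := by
  set M : ℝ := 1 + |a| + |b| + |c| with hM
  have hM1 : 1 ≤ M := by
    have := abs_nonneg a; have := abs_nonneg b; have := abs_nonneg c; linarith
  have hMnn : (0:ℝ) ≤ M := by linarith
  have hM3 : M^3 = (1 + |a| + |b| + |c|) * M^2 := by rw [← hM]; ring
  have hMsq : 1 ≤ M^2 := by nlinarith
  have t1 : 0 ≤ (a + |a|) * M^2 := mul_nonneg (by linarith [neg_abs_le a]) (sq_nonneg M)
  have t1' : 0 ≤ (|a| - a) * M^2 := mul_nonneg (by linarith [le_abs_self a]) (sq_nonneg M)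
  have t2 : 0 ≤ (b + |b|) * M := mul_nonneg (by linarith [neg_abs_le b]) hMnn
  have t2' : 0 ≤ (|b| - b) * M := mul_nonneg (by linarith [le_abs_self b]) hMnn
  have t4 : 0 ≤ |b| * (M^2 - M) := mul_nonneg (abs_nonneg b) (by nlinarith)
  have t5 : 0 ≤ |c| * (M^2 - 1) := mul_nonneg (abs_nonneg c) (by linarith)
  have t3 : -|c| ≤ c := neg_abs_le c
  have t3' : c ≤ |c| := le_abs_self c
  have h1 : (-M)^3 + a*(-M)^2 + b*(-M) + c ≤ 0 := by nlinarith
  have h2 : 0 ≤ M^3 + a*M^2 + b*M + c := by nlinarith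
  have hle : -M ≤ M := by linarith
  have hcont : ContinuousOn (fun x : ℝ => x^3 + a*x^2 + b*x + c) (Set.Icc (-M) M) := by
    apply Continuous.continuousOn; continuity
  have key := intermediate_value_Icc hle hcont
  have h0 : (0:ℝ) ∈ Set.Icc ((-M)^3 + a*(-M)^2 + b*(-M) + c) (M^3 + a*M^2 + b*M + c) :=
    Set.mem_Icc.mpr ⟨h1, h2⟩
  obtain ⟨x, _, hx⟩ := key h0
  exact ⟨x, hx⟩

set_option maxHeartbeats 1000000 in
theorem stmt18 (lam : ℝ) (hlam : lam ≠ 0) :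
    (∃ x y z : ℝ, x ≠ y ∧ y ≠ z ∧ x ≠ z ∧
      lam * x * (1 - x) = y ∧ lam * y * (1 - y) = z ∧ lam * z * (1 - z) = x) ↔
    lam ≤ 1 - 2 * Real.sqrt 2 ∨ 1 + 2 * Real.sqrt 2 ≤ lam := by
  have hs2 : (Real.sqrt 2)^2 = 2 := Real.sq_sqrt (by norm_num)
  have hs2pos : (0:ℝ) < Real.sqrt 2 := Real.sqrt_pos.mpr (by norm_num)
  constructor
  · rintro ⟨x, y, z, hxy, hyz, hxz, h1, h2, h3⟩
    by_contra hcon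
    push_neg at hcon
    obtain ⟨hl, hr⟩ := hcon
    have hdelta : lam^2 - 2*lam - 7 < 0 := by nlinarith
    set cc : ℝ := lam/2 - lam^2/4 with hcc
    set w : ℝ := lam/2 - lam*x with hwdef
    have hw1 : w^2 + cc = lam/2 - lam*y := by
      rw [hwdef, hcc]; linear_combination (-lam) * h1
    have hw2 : (w^2+cc)^2 + cc = lam/2 - lam*z := by
      rw [hw1, hcc]; linear_combination (-lam) * h2
    have hQ3 : ((w^2+cc)^2+cc)^2 + cc = w := by
      rw [hw2, hcc, hwdef]; linear_combination (-lam) * h3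
    have hne : w^2 + cc ≠ w := by
      rw [hw1, hwdef]
      intro h
      apply hxy
      have : lam * (x - y) = 0 := by linarith
      rcases mul_eq_zero.mp this with h' | h'
      · exact absurd h' hlam
      · linarith
    have hPhi : w^6 + w^5 + (3*cc+1)*w^4 + (2*cc+1)*w^3 + (3*cc^2+3*cc+1)*w^2
        + (cc^2+2*cc+1)*w + (cc^3+2*cc^2+cc+1) = 0 := by
      have hfac : (w^2 + cc - w) * (w^6 + w^5 + (3*cc+1)*w^4 + (2*cc+1)*w^3
          + (3*cc^2+3*cc+1)*w^2 + (cc^2+2*cc+1)*w + (cc^3+2*cc^2+cc+1))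
          = ((w^2+cc)^2+cc)^2 + cc - w := by ring
      have hz : (w^2 + cc - w) * (w^6 + w^5 + (3*cc+1)*w^4 + (2*cc+1)*w^3
          + (3*cc^2+3*cc+1)*w^2 + (cc^2+2*cc+1)*w + (cc^3+2*cc^2+cc+1)) = 0 := by
        rw [hfac]; linarith [hQ3]
      rcases mul_eq_zero.mp hz with h' | h'
      · exact absurd (by linarith : w^2 + cc = w) hne
      · exact h'
    have hcpos : 0 < cc + 7/4 := by rw [hcc]; nlinarith
    have hsum : ((w^3 + (cc-1)*w - cc - 1) + (w^2 + w + cc)/2)^2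
        + (cc + 7/4) * (w^2 + w + cc)^2 = 0 := by linear_combination hPhi
    have hBpos : 0 ≤ (cc + 7/4) * (w^2 + w + cc)^2 := mul_nonneg hcpos.le (sq_nonneg _)
    have hABsq : ((w^3 + (cc-1)*w - cc - 1) + (w^2 + w + cc)/2)^2 = 0 := by
      have := sq_nonneg ((w^3 + (cc-1)*w - cc - 1) + (w^2 + w + cc)/2)
      linarith
    have hAB : (w^3 + (cc-1)*w - cc - 1) + (w^2 + w + cc)/2 = 0 := by
      exact sq_eq_zero_iff.mp hABsq
    have hBsq : (cc + 7/4) * (w^2 + w + cc)^2 = 0 := by linarith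
    have hB : w^2 + w + cc = 0 := by
      rcases mul_eq_zero.mp hBsq with h' | h'
      · exact absurd h' (by linarith)
      · exact sq_eq_zero_iff.mp h'
    have hfalse : (0:ℝ) = -1 := by linear_combination (-1)*hAB + (w - 1/2)*hB
    norm_num at hfalse
  · intro hd
    have hdelta : 0 ≤ lam^2 - 2*lam - 7 := by
      rcases hd with h | h
      · nlinarith [mul_nonneg (by linarith : (0:ℝ) ≤ 1 - 2*Real.sqrt 2 - lam)
          (by nlinarith : (0:ℝ) ≤ 1 + 2*Real.sqrt 2 - lam)]
      · nlinarith [mul_nonneg (by linarith : (0:ℝ) ≤ lam - 1 - 2*Real.sqrt 2)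
          (by nlinarith : (0:ℝ) ≤ lam - 1 + 2*Real.sqrt 2)]
    set t : ℝ := Real.sqrt (lam^2 - 2*lam - 7) with htdef
    have ht2 : t^2 = lam^2 - 2*lam - 7 := Real.sq_sqrt hdelta
    set cc : ℝ := lam/2 - lam^2/4 with hcc
    set a : ℝ := (1+t)/2 with hadef
    have ha : a^2 = a - cc - 2 := by
      rw [hadef, hcc]; linear_combination (1/4) * ht2
    obtain ⟨w, hw⟩ := cubic_has_root a (a + cc - 1) ((a-1)*cc - 1)
    set x : ℝ := 1/2 - w/lam with hx
    set y : ℝ := lam * x * (1-x) with hy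
    set z : ℝ := lam * y * (1-y) with hz
    have hlx : lam * x = lam/2 - w := by
      rw [hx]; field_simp
    have hly : lam * y = lam/2 - (w^2 + cc) := by
      rw [hy]; linear_combination (lam/2 + w - lam*x) * hlx + hcc
    have hlz : lam * z = lam/2 - ((w^2+cc)^2 + cc) := by
      rw [hz]; linear_combination (lam/2 + (w^2+cc) - lam*y) * hly + hcc
    have hQ3 : ((w^2+cc)^2+cc)^2 + cc = w := by
      linear_combination (2 + 1*w + 1*w^2 + 1*w^3 + 1*w^5 - 5*a - 4*a*w - 2*a*w^2 - 1*a*w^3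
        - 1*a*w^4 + 9*a^2 + 4*a^2*w + 2*a^2*w^2 + 1*a^2*w^3 - 7*a^3 - 3*a^3*w - 1*a^3*w^2
        + 4*a^4 + 1*a^4*w - 1*a^5 + 4*cc + 4*cc*w + 1*cc*w^2 + 3*cc*w^3 - 8*cc*a - 4*cc*a*w
        - 3*cc*a*w^2 + 7*cc*a^2 + 3*cc*a^2*w - 3*cc*a^3 + 2*cc^2 + 3*cc^2*w - 3*cc^2*a) * hw
      + (1 + 1*w + 1*w^2 - 2*a - 5*a*w - 4*a*w^2 + 3*a^2 + 6*a^2*w + 5*a^2*w^2 - 1*a^3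
        - 4*a^3*w - 4*a^3*w^2 + 1*a^4*w + 1*a^4*w^2 + 3*cc + 3*cc*w + 2*cc*w^2 - 5*cc*a
        - 4*cc*a*w - 4*cc*a*w^2 + 5*cc*a^2 + 2*cc*a^2*w + 2*cc*a^2*w^2 - 4*cc*a^3 + 1*cc*a^4
        + 2*cc^2 + 1*cc^2*w + 1*cc^2*w^2 - 4*cc^2*a + 2*cc^2*a^2 + 1*cc^3) * ha
    have hfz : lam * z * (1-z) = x := by
      apply mul_left_cancel₀ hlam
      have hexp : lam * (lam * z * (1-z)) = lam/2 - (((w^2+cc)^2+cc)^2 + cc) := by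
        linear_combination (lam/2 + ((w^2+cc)^2+cc) - lam*z) * hlz + hcc
      rw [hexp, hQ3, hlx]
    have hxyne : x ≠ y := by
      intro h
      have hxyw : w^2 + cc = w := by
        have h2 : lam * x = lam * y := by rw [h]
        rw [hlx, hly] at h2
        linear_combination h2
      have hr : 2*a*w = 2*cc + 1 := by linear_combination hw - (w+a+1)*hxyw
      have hS : 2*a = 1 - 4*cc := by
        linear_combination (-4*a^2)*hxyw + (2*a*w+2*cc+1-2*a)*hr + 4*cc*ha
      have hT : (16*cc^2 + 4*cc + 7 : ℝ) = 0 := by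
        linear_combination (4*cc - 2*a + 1)*hS + 4*ha
      nlinarith [sq_nonneg (4*cc + 1/2)]
    refine ⟨x, y, z, hxyne, ?_, ?_, hy.symm, hz.symm, hfz⟩
    · intro h
      apply hxyne
      have hzx : z = x := by
        calc z = lam * y * (1-y) := hz
        _ = lam * z * (1-z) := by rw [h]
        _ = x := hfz
      exact hzx.symm.trans h.symm
    · intro h
      apply hxyne
      have hyx : y = x := by
        calc y = lam * x * (1-x) := hy
        _ = lam * z * (1-z) := by rw [h]
        _ = x := hfz
      exact hyx.symm
end
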